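/- Let G = G_m with 18 ≤ m ≤ 27 be a group of Family 8. If |G| ≥ 2^6, then every maximal elementary abelian subgroup of G has order at most 2^3. If moreover |G| > 2^6 and B is a maximal elementary abelian subgroup of G of order 2^3, then B is not a normal subgroup of G. -/

import Mathlib

open Subgroup Pointwise

/-- A subgroup of a `2`-group is elementary abelian if it is abelian and all of its
nontrivial elements have order `2`. -/
def IsElemAb2 {G : Type*} [Group G] (E : Subgroup G) : Prop :=
  (∀ a ∈ E, ∀ b ∈ E, a * b = b * a) ∧ ∀ g ∈ E, g ^ 2 = 1

/-- A maximal (w.r.t. inclusion) elementary abelian subgroup. -/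
def IsMaxElemAb2 {G : Type*} [Group G] (E : Subgroup G) : Prop :=
  IsElemAb2 E ∧ ∀ E' : Subgroup G, IsElemAb2 E' → E ≤ E' → E' = E

/-- `quillenCount G i` is the number of conjugacy classes of maximal elementary abelian
subgroups of `G` of rank `i` (i.e. of order `2^i`): we count the orbits, under the
conjugation action of `G` on its subgroups, of such subgroups. -/
noncomputable def quillenCount (G : Type*) [Group G] (i : ℕ) : ℕ :=
  Set.ncard {C : Set (Subgroup G) | ∃ E : Subgroup G,
    IsMaxElemAb2 E ∧ Nat.card E = 2 ^ i ∧
    C = {E' | ∃ g : G, E' = Subgroup.map (MulAut.conj g).toMonoidHom E}}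

/-- The Quillen parameter `Q(G) = (q₁, q₂, q₃, q₄)`. -/
noncomputable def QuillenParam (G : Type*) [Group G] : ℕ × ℕ × ℕ × ℕ :=
  (quillenCount G 1, quillenCount G 2, quillenCount G 3, quillenCount G 4)

/-- the element `z₁` of the group `G_m` of family 8 (`|G| = 2^(2k+2+ε)`) -/
def fam8z1 {G : Type*} [Group G] (k ε : ℕ) (x1 x2 : G) : G :=
  if ε = 0 then x2 ^ 2 ^ (k - 1) else x1 ^ 2 ^ k

/-- the element `z₂` of the group `G_m` of family 8 -/
def fam8z2 {G : Type*} [Group G] (k ε : ℕ) (x1 x2 : G) : G :=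
  if ε = 0 then x1 ^ 2 ^ (k - 1) else x2 ^ 2 ^ (k - 1)

/-- exponent of `z₁` in the parameter `t₁` of `G_m`, `18 ≤ m ≤ 27` -/
def t1e (m : ℕ) : ℕ := if m ∈ ([19, 20, 22, 24, 27] : List ℕ) then 1 else 0

/-- exponent of `z₁` in the parameter `t₂` of `G_m` -/
def t2e1 (m : ℕ) : ℕ := if m ∈ ([20, 23, 25, 27] : List ℕ) then 1 else 0

/-- exponent of `z₂` in the parameter `t₂` of `G_m` -/
def t2e2 (m : ℕ) : ℕ := if m ∈ ([24, 25, 26, 27] : List ℕ) then 1 else 0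

/-- exponent of `z₁` in the parameter `t₃` of `G_m` -/
def t3e (m : ℕ) : ℕ := if m ∈ ([21, 22, 26, 27] : List ℕ) then 1 else 0

/-- `IsFam8 k ε m x1 x2 y` says that the group `G` has order `2^(2k+2+ε)`, is generated by
the listed elements, and that they satisfy the defining relations of the group `G_m` of
family 8 (`18 ≤ m ≤ 27`); since the corresponding presented group has order `2^(2k+2+ε)`,
this holds exactly when `G ≅ G_m`. -/
def IsFam8 (k ε m : ℕ) {G : Type*} [Group G] (x1 x2 y : G) : Prop :=
  Nat.card G = 2 ^ (2 * k + 2 + ε) ∧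
  Subgroup.closure ({x1, x2, y} : Set G) = ⊤ ∧
  x1 ^ 2 ^ (k + ε) = 1 ∧
  x2 ^ 2 ^ k = 1 ∧
  y ^ 4 = fam8z1 k ε x1 x2 ^ t1e m ∧
  y⁻¹ * x1 * y = x1 * x2 ∧
  y⁻¹ * x2 * y = x1⁻¹ ^ 2 * x2⁻¹ * fam8z1 k ε x1 x2 ^ t2e1 m * fam8z2 k ε x1 x2 ^ t2e2 m ∧
  x1⁻¹ * x2 * x1 = x2 * fam8z1 k ε x1 x2 ^ t3e m

/-!
Let `A = ⟨x₁, x₂⟩` and `s = z₁ ^ t₃` (so that `x₁⁻¹ x₂ x₁ = x₂ s`). Since `z₁` lies in `⟨x₁²⟩` or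
`⟨x₂²⟩` and `z₁² = 1`, the involution `s` is central in `A`; `A` is normal and `G / A` is cyclic,
generated by the image of `y`, with `y⁴ ∈ A`. Hence `A = ⟨x₁⟩⟨x₂⟩`, and comparing
`|G| = |G / A| |A| ≤ 4 |x₁| |x₂|` with `|G| = 2 ^ (2k+2+ε)` gives `|G / A| = 4`,
`|x₁| = 2 ^ (k+ε)`, `|x₂| = 2 ^ k` and `⟨x₁⟩ ∩ ⟨x₂⟩ = 1`. Then
`(x₁^p x₂^q)² = x₁^(2p) x₂^(2q) s^(pq)` shows that every involution of `A` is a product of involutions of `⟨x₁⟩` and `⟨x₂⟩`, which are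
even powers and hence central in `A`: there are at most four of them.

An elementary abelian `E` therefore meets `A` in at most `4` elements and maps into the subgroup
of order `2` of `G / A`, so `|E| ≤ 8`. If `|E| = 8`, then `E` contains some `t = y² a` with
`a ∈ A`, and `y⁻² x₁ y² = x₁⁻¹ t₂` gives `t⁻¹ x₁ t = x₁⁻¹ u` with `u` a central involution of `A`.
So `[t, x₁]` squares to `x₁⁴ ≠ 1` once `|G| > 2⁶`, and `E` cannot be normal.
-/

section Generalities

variable {G : Type*} [Group G]

theorem mem_normalizer_closure_of_conj_mem [Finite G] {S : Set G} {g : G}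
    (h : ∀ x ∈ S, g⁻¹ * x * g ∈ closure S) : g ∈ normalizer (closure S : Set G) := by
  have hle : closure S ≤ (closure S).comap (MulAut.conj g⁻¹).toMonoidHom :=
    (closure_le _).mpr fun x hx => by simpa using h x hx
  exact inv_mem_iff.mp (mem_normalizer_fintype fun n hn => by simpa using hle hn)

theorem closure_normal_of_conj_mem [Finite G] {S : Set G} {y : G}
    (htop : closure (S ∪ {y}) = ⊤) (hy : ∀ x ∈ S, y⁻¹ * x * y ∈ closure S) :
    (closure S).Normal := by
  rw [← normalizer_eq_top_iff, eq_top_iff, ← htop, closure_le]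
  rintro g (hg | rfl)
  · exact le_normalizer (subset_closure hg)
  · exact mem_normalizer_closure_of_conj_mem hy

theorem zpowers_mk_eq_top {N : Subgroup G} [N.Normal] {S : Set G} {y : G} (hS : S ⊆ N)
    (htop : closure (S ∪ {y}) = ⊤) : zpowers (y : G ⧸ N) = ⊤ := by
  rw [eq_top_iff, ← map_top_of_surjective _ (QuotientGroup.mk'_surjective N), ← htop,
    MonoidHom.map_closure, closure_le]
  rintro _ ⟨g, hg | rfl, rfl⟩
  · simp [(QuotientGroup.eq_one_iff g).mpr (hS hg)]
  · exact mem_zpowers _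

theorem disjoint_of_card_mul_le [Finite G] {H K : Subgroup G}
    (hcard : Nat.card H * Nat.card K ≤ Nat.card ((H : Set G) * (K : Set G))) : Disjoint H K := by
  let f : H × K → ((H : Set G) * K : Set G) := fun x =>
    ⟨x.1 * x.2, Set.mul_mem_mul x.1.2 x.2.2⟩
  have hf : Function.Surjective f := by
    rintro ⟨_, h, hh, k, hk, rfl⟩
    exact ⟨(⟨h, hh⟩, ⟨k, hk⟩), rfl⟩
  have hinj := (hf.bijective_of_nat_card_le (by rwa [Nat.card_prod])).injective
  refine disjoint_def.mpr fun {x} hxH hxK => ?_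
  have := @hinj (⟨x, hxH⟩, ⟨x⁻¹, inv_mem hxK⟩) 1 (by ext; simp [f])
  simpa using congrArg (fun p => (p.1 : G)) this

theorem mem_zpowers_pow_of_sq_eq_one {g h : G} {m : ℕ} (hg : orderOf g = 2 * m)
    (hh : h ∈ zpowers g) (h2 : h ^ 2 = 1) : h ∈ zpowers (g ^ m) := by
  obtain ⟨p, rfl⟩ := mem_zpowers_iff.mp hh
  have hdvd : ((2 * m : ℕ) : ℤ) ∣ 2 * p := by
    rw [← hg, orderOf_dvd_iff_zpow_eq_one, zpow_mul, zpow_ofNat, ← zpow_natCast, ← zpow_mul,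
      mul_comm, zpow_mul, zpow_natCast, h2]
  obtain ⟨t, ht⟩ : (m : ℤ) ∣ p := by
    push_cast at hdvd
    exact (mul_dvd_mul_iff_left two_ne_zero).mp hdvd
  exact ⟨t, by rw [ht, zpow_mul, zpow_natCast]⟩

theorem card_eq_card_inf_ker_mul_card_map {G' : Type*} [Group G'] (f : G →* G')
    (E : Subgroup G) : Nat.card E = Nat.card (f.ker ⊓ E : Subgroup G) * Nat.card (E.map f) := by
  have := relIndex_inf_mul_relIndex ⊥ f.ker E
  rwa [relIndex_bot_left, bot_inf_eq, relIndex_bot_left, relIndex_ker, eq_comm] at this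

theorem card_zpowers_pow_le_two {g : G} {m : ℕ} (hg : orderOf g = 2 * m) :
    Nat.card (zpowers (g ^ m)) ≤ 2 := by
  rw [Nat.card_zpowers]
  exact orderOf_le_of_pow_eq_one two_pos (by rw [← pow_mul, mul_comm, ← hg, pow_orderOf_eq_one])

theorem inv_mul_conj_sq_eq_pow_four {t x u : G} (h : t⁻¹ * x * t = x⁻¹ * u)
    (hxu : Commute x u) (hu : u ^ 2 = 1) : (t⁻¹ * (x⁻¹ * t * x)) ^ 2 = x ^ 4 := by
  calc (t⁻¹ * (x⁻¹ * t * x)) ^ 2 = ((t⁻¹ * x * t)⁻¹ * x) ^ 2 := by group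
    _ = (u⁻¹ * x ^ 2) ^ 2 := by rw [h, mul_inv_rev, inv_inv, mul_assoc, ← sq]
    _ = x ^ 4 := by
      rw [(hxu.pow_left 2).inv_right.symm.mul_pow, inv_pow, hu, inv_one, one_mul, ← pow_mul]

theorem conj_eq_mul_swap {a b s : G} (hab : a⁻¹ * b * a = b * s) (hs : s ^ 2 = 1) :
    b⁻¹ * a * b = a * s := by
  have hs' : s⁻¹ = s := inv_eq_of_mul_eq_one_right (by rw [← sq, hs])
  calc b⁻¹ * a * b = a * (a⁻¹ * b * a)⁻¹ * b := by group
    _ = a * s := by rw [hab, mul_inv_rev, hs']; group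

theorem commute_sq_of_conj_eq_mul {a b s : G} (hab : a⁻¹ * b * a = b * s) (hbs : Commute b s)
    (hs : s ^ 2 = 1) : Commute a (b ^ 2) := by
  have hconj : a⁻¹ * b ^ 2 * a = b ^ 2 := by
    calc a⁻¹ * b ^ 2 * a = (a⁻¹ * b * a) ^ 2 := by simp only [sq]; group
      _ = b ^ 2 := by rw [hab, hbs.mul_pow, hs, mul_one]
  calc a * b ^ 2 = a * (a⁻¹ * b ^ 2 * a) := by rw [hconj]
    _ = b ^ 2 * a := by group

end Generalities

section Quotient
variable {G : Type*} [Group G] {N : Subgroup G} [N.Normal] {g : G ⧸ N} {m : ℕ}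
  {E : Subgroup G}

theorem map_mk_le_zpowers (hg : zpowers g = ⊤) (hord : orderOf g = 2 * m)
    (hE : ∀ x ∈ E, x ^ 2 = 1) : E.map (QuotientGroup.mk' N) ≤ zpowers (g ^ m) := by
  rintro _ ⟨x, hx, rfl⟩
  exact mem_zpowers_pow_of_sq_eq_one hord (hg ▸ mem_top _) (by rw [← map_pow, hE x hx, map_one])

theorem card_map_mk_le_two [Finite G] (hg : zpowers g = ⊤) (hord : orderOf g = 2 * m)
    (hE : ∀ x ∈ E, x ^ 2 = 1) : Nat.card (E.map (QuotientGroup.mk' N)) ≤ 2 :=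
  (card_le_of_le (map_mk_le_zpowers hg hord hE)).trans (card_zpowers_pow_le_two hord)

theorem card_le_card_inf_mul_two [Finite G] (hg : zpowers g = ⊤) (hord : orderOf g = 2 * m)
    (hE : ∀ x ∈ E, x ^ 2 = 1) : Nat.card E ≤ Nat.card (N ⊓ E : Subgroup G) * 2 := by
  rw [card_eq_card_inf_ker_mul_card_map (QuotientGroup.mk' N) E, QuotientGroup.ker_mk']
  exact Nat.mul_le_mul_left _ (card_map_mk_le_two hg hord hE)

theorem exists_mem_mk_eq_pow [Finite G] (hg : zpowers g = ⊤) (hord : orderOf g = 2 * m)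
    (hE : ∀ x ∈ E, x ^ 2 = 1) (hlt : Nat.card (N ⊓ E : Subgroup G) < Nat.card E) :
    ∃ t ∈ E, (t : G ⧸ N) = g ^ m := by
  rw [card_eq_card_inf_ker_mul_card_map (QuotientGroup.mk' N) E, QuotientGroup.ker_mk'] at hlt
  have h2 : 2 ≤ Nat.card (E.map (QuotientGroup.mk' N)) :=
    Nat.lt_of_mul_lt_mul_left (a := Nat.card (N ⊓ E : Subgroup G)) (by rwa [mul_one])
  have heq : E.map (QuotientGroup.mk' N) = zpowers (g ^ m) :=
    eq_of_le_of_card_ge (map_mk_le_zpowers hg hord hE) ((card_zpowers_pow_le_two hord).trans h2)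
  obtain ⟨t, ht, hteq⟩ := heq ▸ mem_zpowers (g ^ m)
  exact ⟨t, ht, hteq⟩

end Quotient

structure IsCentralCommutatorPair {G : Type*} [Group G] (a b s : G) : Prop where
  conj_eq : a⁻¹ * b * a = b * s
  sq_eq_one : s ^ 2 = 1
  commute_left : Commute a s
  commute_right : Commute b s
  mem_zpowers_or : s ∈ zpowers a ∨ s ∈ zpowers b

namespace IsCentralCommutatorPair

variable {G : Type*} [Group G] {a b s : G}

theorem of_mem_zpowers_sq (hab : a⁻¹ * b * a = b * s) (hs : s ^ 2 = 1)
    (hmem : s ∈ zpowers (a ^ 2) ∨ s ∈ zpowers (b ^ 2)) : IsCentralCommutatorPair a b s := by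
  rcases hmem with ha | hb
  · obtain ⟨n, rfl⟩ := mem_zpowers_iff.mp ha
    have has : Commute a ((a ^ 2) ^ n) := ((Commute.refl a).pow_right 2).zpow_right n
    exact ⟨hab, hs, has,
      (commute_sq_of_conj_eq_mul (conj_eq_mul_swap hab hs) has hs).zpow_right n,
      .inl (zpow_mem (pow_mem (mem_zpowers a) 2) n)⟩
  · obtain ⟨n, rfl⟩ := mem_zpowers_iff.mp hb
    have hbs : Commute b ((b ^ 2) ^ n) := ((Commute.refl b).pow_right 2).zpow_right n
    exact ⟨hab, hs, (commute_sq_of_conj_eq_mul hab hbs hs).zpow_right n, hbs,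
      .inr (zpow_mem (pow_mem (mem_zpowers b) 2) n)⟩

variable (h : IsCentralCommutatorPair a b s)
include h

theorem symm : IsCentralCommutatorPair b a s :=
  ⟨conj_eq_mul_swap h.conj_eq h.sq_eq_one, h.sq_eq_one, h.commute_right, h.commute_left,
    h.mem_zpowers_or.symm⟩

theorem commute_sq : Commute a (b ^ 2) :=
  commute_sq_of_conj_eq_mul h.conj_eq h.commute_right h.sq_eq_one

theorem zpow_mul_zpow (p q : ℤ) : b ^ q * a ^ p = a ^ p * b ^ q * s ^ (p * q) := by
  have h1 : SemiconjBy a (b ^ q * s ^ q) (b ^ q) := by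
    rw [← h.commute_right.mul_zpow]
    refine SemiconjBy.zpow_right ?_ q
    show a * (b * s) = b * a
    rw [← h.conj_eq]; group
  have h2 : SemiconjBy (b ^ q) (a ^ p) (a ^ p * s ^ (p * q)) := by
    rw [mul_comm p, zpow_mul, ← (h.commute_left.zpow_right q).mul_zpow]
    refine SemiconjBy.zpow_right ?_ p
    show b ^ q * a = a * s ^ q * b ^ q
    rw [mul_assoc, ((h.commute_right.zpow_zpow q q).symm).eq, h1.eq]
  rw [h2.eq, mul_assoc, mul_assoc, ((h.commute_right.zpow_zpow q (p * q)).symm).eq]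

theorem coe_closure_eq_mul [Finite G] :
    (closure {a, b} : Set G) = (zpowers a : Set G) * zpowers b := by
  have hcl : closure {a, b} = zpowers a ⊔ zpowers b := by
    rw [Set.insert_eq, Subgroup.closure_union, zpowers_eq_closure, zpowers_eq_closure]
  rw [hcl]
  rcases h.mem_zpowers_or with hs | hs
  · refine coe_mul_of_right_le_normalizer_left _ _ (zpowers_le.mpr ?_)
    rw [zpowers_eq_closure]
    refine mem_normalizer_closure_of_conj_mem fun x hx => ?_
    rw [Set.mem_singleton_iff.mp hx, h.symm.conj_eq, ← zpowers_eq_closure]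
    exact mul_mem (mem_zpowers a) hs
  · refine coe_mul_of_left_le_normalizer_right _ _ (zpowers_le.mpr ?_)
    rw [zpowers_eq_closure]
    refine mem_normalizer_closure_of_conj_mem fun x hx => ?_
    rw [Set.mem_singleton_iff.mp hx, h.conj_eq, ← zpowers_eq_closure]
    exact mul_mem (mem_zpowers b) hs

theorem exists_conj_eq_mul_zpow [Finite G] {g : G} (hg : g ∈ closure {a, b}) :
    ∃ n : ℤ, g⁻¹ * a * g = a * s ^ n := by
  rw [← SetLike.mem_coe, h.coe_closure_eq_mul] at hg
  obtain ⟨_, ⟨p, rfl⟩, _, ⟨q, rfl⟩, rfl⟩ := hg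
  refine ⟨-q, ?_⟩
  have hswap := h.zpow_mul_zpow 1 (-q)
  rw [zpow_one, one_mul] at hswap
  calc (a ^ p * b ^ q)⁻¹ * a * (a ^ p * b ^ q) = b ^ (-q) * a * b ^ q := by group
    _ = a * s ^ (-q) := by
      rw [hswap, mul_assoc, ((h.commute_right.zpow_zpow q (-q)).symm).eq]; group

theorem sq_eq_one_of_mul_sq_eq_one_of_mem (hdisj : Disjoint (zpowers a) (zpowers b))
    (hs : s ∈ zpowers b) (ha : 4 ∣ orderOf a) {p q : ℤ} (hpq : (a ^ p * b ^ q) ^ 2 = 1) :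
    (a ^ p) ^ 2 = 1 ∧ (b ^ q) ^ 2 = 1 := by
  have hsq : (a ^ p * b ^ q) ^ 2 = a ^ (2 * p) * (b ^ (2 * q) * s ^ (p * q)) := by
    calc (a ^ p * b ^ q) ^ 2 = a ^ p * (b ^ q * a ^ p) * b ^ q := by simp only [sq]; group
      _ = a ^ p * a ^ p * b ^ q * (s ^ (p * q) * b ^ q) := by rw [h.zpow_mul_zpow]; group
      _ = a ^ (2 * p) * (b ^ (2 * q) * s ^ (p * q)) := by
        rw [((h.commute_right.zpow_zpow q (p * q)).symm).eq]; group
  have hap : a ^ (2 * p) = 1 := by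
    rw [hsq, mul_eq_one_iff_eq_inv] at hpq
    refine disjoint_def.mp hdisj (zpow_mem (mem_zpowers a) _) ?_
    rw [hpq]
    exact inv_mem (mul_mem (zpow_mem (mem_zpowers b) _) (zpow_mem hs _))
  have hp : 2 ∣ p := by
    have := (Int.natCast_dvd_natCast.mpr ha).trans (orderOf_dvd_iff_zpow_eq_one.mpr hap)
    omega
  have hs1 : s ^ (p * q) = 1 :=
    orderOf_dvd_iff_zpow_eq_one.mp ((Int.natCast_dvd_natCast.mpr
      (orderOf_dvd_of_pow_eq_one h.sq_eq_one)).trans (hp.mul_right q))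
  rw [hsq, hap, hs1, one_mul, mul_one] at hpq
  constructor
  · rw [← zpow_natCast, ← zpow_mul, mul_comm]; exact hap
  · rw [← zpow_natCast, ← zpow_mul, mul_comm]; exact hpq

theorem sq_eq_one_of_mul_sq_eq_one (hdisj : Disjoint (zpowers a) (zpowers b))
    (ha : 4 ∣ orderOf a) (hb : 4 ∣ orderOf b) {p q : ℤ} (hpq : (a ^ p * b ^ q) ^ 2 = 1) :
    (a ^ p) ^ 2 = 1 ∧ (b ^ q) ^ 2 = 1 := by
  rcases h.mem_zpowers_or with hs | hs
  -- `b ^ q * a ^ p` differs from `a ^ p * b ^ q` by a central involution: swap `a` and `b`.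
  · have hqp : (b ^ q * a ^ p) ^ 2 = 1 := by
      have hs2 : (s ^ (p * q)) ^ 2 = 1 := by
        rw [← zpow_natCast, ← zpow_mul, mul_comm, zpow_mul, zpow_natCast, h.sq_eq_one, one_zpow]
      rw [h.zpow_mul_zpow, (((h.commute_left.zpow_zpow p (p * q)).mul_left
        (h.commute_right.zpow_zpow q (p * q)))).mul_pow, hpq, hs2, one_mul]
    exact (h.symm.sq_eq_one_of_mul_sq_eq_one_of_mem hdisj.symm hs hb hqp).symm
  · exact h.sq_eq_one_of_mul_sq_eq_one_of_mem hdisj hs ha hpq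

theorem mem_mul_of_sq_eq_one [Finite G] (hdisj : Disjoint (zpowers a) (zpowers b))
    (ha : 4 ∣ orderOf a) (hb : 4 ∣ orderOf b) {g : G} (hg : g ∈ closure {a, b})
    (hg2 : g ^ 2 = 1) :
    g ∈ (zpowers (a ^ (orderOf a / 2)) : Set G) * zpowers (b ^ (orderOf b / 2)) := by
  rw [← SetLike.mem_coe, h.coe_closure_eq_mul] at hg
  obtain ⟨_, ⟨p, rfl⟩, _, ⟨q, rfl⟩, rfl⟩ := hg
  obtain ⟨hp, hq⟩ := h.sq_eq_one_of_mul_sq_eq_one hdisj ha hb hg2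
  exact Set.mul_mem_mul
    (mem_zpowers_pow_of_sq_eq_one (by omega) (zpow_mem (mem_zpowers a) p) hp)
    (mem_zpowers_pow_of_sq_eq_one (by omega) (zpow_mem (mem_zpowers b) q) hq)

theorem commute_pow_orderOf_div_two (ha : 4 ∣ orderOf a) : Commute b (a ^ (orderOf a / 2)) := by
  obtain ⟨r, hr⟩ := ha
  rw [hr, show 4 * r / 2 = 2 * r by omega, pow_mul]
  exact h.symm.commute_sq.pow_right r

theorem commute_of_sq_eq_one [Finite G] (hdisj : Disjoint (zpowers a) (zpowers b))
    (ha : 4 ∣ orderOf a) (hb : 4 ∣ orderOf b) {g g' : G} (hg : g ∈ closure {a, b})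
    (hg2 : g ^ 2 = 1) (hg' : g' ∈ closure {a, b}) : Commute g g' := by
  have hag : Commute a g := by
    obtain ⟨_, ⟨i, rfl⟩, _, ⟨j, rfl⟩, rfl⟩ := h.mem_mul_of_sq_eq_one hdisj ha hb hg hg2
    exact (((Commute.refl a).pow_right _).zpow_right i).mul_right
      ((h.symm.commute_pow_orderOf_div_two hb).zpow_right j)
  have hbg : Commute b g := by
    obtain ⟨_, ⟨i, rfl⟩, _, ⟨j, rfl⟩, rfl⟩ := h.mem_mul_of_sq_eq_one hdisj ha hb hg hg2
    exact ((h.commute_pow_orderOf_div_two ha).zpow_right i).mul_right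
      (((Commute.refl b).pow_right _).zpow_right j)
  have hle : closure {a, b} ≤ centralizer {g} := by
    rw [closure_le, Set.insert_subset_iff, Set.singleton_subset_iff]
    exact ⟨mem_centralizer_singleton_iff.mpr hag.eq, mem_centralizer_singleton_iff.mpr hbg.eq⟩
  exact (mem_centralizer_singleton_iff.mp (hle hg')).symm

theorem card_le_four [Finite G] (hdisj : Disjoint (zpowers a) (zpowers b))
    (ha : 4 ∣ orderOf a) (hb : 4 ∣ orderOf b) {E : Subgroup G} (hE : E ≤ closure {a, b})
    (hE2 : ∀ g ∈ E, g ^ 2 = 1) : Nat.card E ≤ 4 := by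
  calc Nat.card E
      ≤ Nat.card ((zpowers (a ^ (orderOf a / 2)) : Set G) *
          (zpowers (b ^ (orderOf b / 2)) : Set G)) :=
        Nat.card_mono (Set.toFinite _)
          fun g hg => h.mem_mul_of_sq_eq_one hdisj ha hb (hE hg) (hE2 g hg)
    _ ≤ Nat.card (zpowers (a ^ (orderOf a / 2))) * Nat.card (zpowers (b ^ (orderOf b / 2))) :=
        Set.natCard_mul_le
    _ ≤ 2 * 2 :=
        Nat.mul_le_mul (card_zpowers_pow_le_two (by omega)) (card_zpowers_pow_le_two (by omega))

end IsCentralCommutatorPair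

section Family8

variable {G : Type*} [Group G]

theorem fam8z1_mem_zpowers_sq {k : ℕ} (ε : ℕ) (hk : 2 ≤ k) (x1 x2 : G) :
    fam8z1 k ε x1 x2 ∈ zpowers (x1 ^ 2) ∨ fam8z1 k ε x1 x2 ∈ zpowers (x2 ^ 2) := by
  unfold fam8z1
  split_ifs
  · right
    rw [show 2 ^ (k - 1) = 2 * 2 ^ (k - 2) by rw [← pow_succ']; congr 1; omega, pow_mul]
    exact npow_mem_zpowers _ _
  · left
    rw [show 2 ^ k = 2 * 2 ^ (k - 1) by rw [← pow_succ']; congr 1; omega, pow_mul]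
    exact npow_mem_zpowers _ _

theorem fam8z1_mem_closure (k ε : ℕ) (x1 x2 : G) : fam8z1 k ε x1 x2 ∈ closure {x1, x2} := by
  unfold fam8z1
  split_ifs
  · exact pow_mem (subset_closure (by simp)) _
  · exact pow_mem (subset_closure (by simp)) _

theorem fam8z2_mem_closure (k ε : ℕ) (x1 x2 : G) : fam8z2 k ε x1 x2 ∈ closure {x1, x2} := by
  unfold fam8z2
  split_ifs
  · exact pow_mem (subset_closure (by simp)) _
  · exact pow_mem (subset_closure (by simp)) _

theorem fam8z1_sq {k ε : ℕ} {x1 x2 : G} (hε : ε ≤ 1) (hk : 1 ≤ k)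
    (h1 : x1 ^ 2 ^ (k + ε) = 1) (h2 : x2 ^ 2 ^ k = 1) : fam8z1 k ε x1 x2 ^ 2 = 1 := by
  unfold fam8z1
  split_ifs
  · rw [← pow_mul, ← pow_succ, Nat.sub_add_cancel hk, h2]
  · rw [← pow_mul, ← pow_succ, show k + 1 = k + ε by omega, h1]

theorem fam8z2_sq {k ε : ℕ} {x1 x2 : G} (hk : 1 ≤ k) (h1 : x1 ^ 2 ^ (k + ε) = 1)
    (h2 : x2 ^ 2 ^ k = 1) : fam8z2 k ε x1 x2 ^ 2 = 1 := by
  unfold fam8z2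
  split_ifs with hε
  · rw [← pow_mul, ← pow_succ, Nat.sub_add_cancel hk, ← h1, hε, add_zero]
  · rw [← pow_mul, ← pow_succ, Nat.sub_add_cancel hk, h2]

def fam8t2 (k ε m : ℕ) (x1 x2 : G) : G :=
  fam8z1 k ε x1 x2 ^ t2e1 m * fam8z2 k ε x1 x2 ^ t2e2 m

theorem fam8t2_mem_closure (k ε m : ℕ) (x1 x2 : G) : fam8t2 k ε m x1 x2 ∈ closure {x1, x2} :=
  mul_mem (pow_mem (fam8z1_mem_closure k ε x1 x2) _) (pow_mem (fam8z2_mem_closure k ε x1 x2) _)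

namespace IsFam8

variable {k ε m : ℕ} {x1 x2 y : G} (hG : IsFam8 k ε m x1 x2 y)
include hG

theorem finite : Finite G :=
  Nat.finite_of_card_ne_zero (by rw [hG.1]; positivity)

theorem isCentralCommutatorPair (hε : ε ≤ 1) (hk : 2 ≤ k) :
    IsCentralCommutatorPair x1 x2 (fam8z1 k ε x1 x2 ^ t3e m) := by
  obtain ⟨-, -, h1, h2, -, -, -, h6⟩ := hG
  refine .of_mem_zpowers_sq h6 ?_
    ((fam8z1_mem_zpowers_sq ε hk x1 x2).imp (pow_mem · _) (pow_mem · _))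
  rw [← pow_mul, mul_comm, pow_mul, fam8z1_sq hε (by omega) h1 h2, one_pow]

theorem normal : (closure ({x1, x2} : Set G)).Normal := by
  have := hG.finite
  obtain ⟨-, htop, -, -, -, h4, h5, -⟩ := hG
  have hx1 : x1 ∈ closure {x1, x2} := subset_closure (by simp)
  have hx2 : x2 ∈ closure {x1, x2} := subset_closure (by simp)
  refine closure_normal_of_conj_mem (y := y) (by rwa [Set.insert_union, Set.singleton_union]) ?_
  intro x hx
  rcases hx with rfl | hx
  · rw [h4]
    exact mul_mem hx1 hx2
  · rw [Set.mem_singleton_iff.mp hx, h5]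
    exact mul_mem (mul_mem (mul_mem (pow_mem (inv_mem hx1) 2) (inv_mem hx2))
      (pow_mem (fam8z1_mem_closure k ε x1 x2) _)) (pow_mem (fam8z2_mem_closure k ε x1 x2) _)

theorem zpowers_mk_eq_top [(closure ({x1, x2} : Set G)).Normal] :
    zpowers (y : G ⧸ closure ({x1, x2} : Set G)) = ⊤ :=
  _root_.zpowers_mk_eq_top subset_closure
    (by rw [Set.insert_union, Set.singleton_union]; exact hG.2.1)

theorem orderOf_eq (hε : ε ≤ 1) (hk : 2 ≤ k) [(closure ({x1, x2} : Set G)).Normal] :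
    orderOf x1 = 2 ^ (k + ε) ∧ orderOf x2 = 2 ^ k ∧
      orderOf (y : G ⧸ closure ({x1, x2} : Set G)) = 4 ∧
      Nat.card (closure ({x1, x2} : Set G)) = orderOf x1 * orderOf x2 := by
  have := hG.finite
  have hP := hG.isCentralCommutatorPair hε hk
  have hquot : Nat.card (G ⧸ closure ({x1, x2} : Set G)) =
      orderOf (y : G ⧸ closure ({x1, x2} : Set G)) := by
    rw [← Nat.card_zpowers, hG.zpowers_mk_eq_top, card_top]
  obtain ⟨hcard, -, h1, h2, h3, -⟩ := hG
  have hy : orderOf (y : G ⧸ closure ({x1, x2} : Set G)) ≤ 4 := by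
    refine orderOf_le_of_pow_eq_one (by norm_num) ?_
    rw [← QuotientGroup.mk_pow, h3, QuotientGroup.eq_one_iff]
    exact pow_mem (fam8z1_mem_closure k ε x1 x2) _
  have hA : Nat.card (closure ({x1, x2} : Set G)) ≤ orderOf x1 * orderOf x2 := by
    rw [← Nat.card_zpowers, ← Nat.card_zpowers]
    exact (Nat.card_congr (Equiv.setCongr hP.coe_closure_eq_mul)).le.trans Set.natCard_mul_le
  have ho1 : orderOf x1 ≤ 2 ^ (k + ε) := orderOf_le_of_pow_eq_one (by positivity) h1
  have ho2 : orderOf x2 ≤ 2 ^ k := orderOf_le_of_pow_eq_one (by positivity) h2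
  -- `|G| = |G/A| |A| ≤ 4 |x₁| |x₂| ≤ 2^(2k+2+ε) = |G|` forces equality throughout.
  have hGA := card_eq_card_quotient_mul_card_subgroup (closure ({x1, x2} : Set G))
  rw [hcard, hquot, show 2 * k + 2 + ε = 2 + ((k + ε) + k) by omega, pow_add, pow_add] at hGA
  obtain ⟨hy4, hAeq⟩ := (mul_eq_mul_iff_eq_and_eq_of_pos' hy
    (hA.trans (Nat.mul_le_mul ho1 ho2)) (by norm_num) Nat.card_pos).mp hGA.symm
  obtain ⟨ho1', ho2'⟩ := (mul_eq_mul_iff_eq_and_eq_of_pos ho1 ho2 (orderOf_pos x1)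
    (by positivity)).mp (le_antisymm (Nat.mul_le_mul ho1 ho2) (hAeq ▸ hA))
  exact ⟨ho1', ho2', hy4, le_antisymm hA (by rw [hAeq, ho1', ho2'])⟩

theorem disjoint_zpowers (hε : ε ≤ 1) (hk : 2 ≤ k) : Disjoint (zpowers x1) (zpowers x2) := by
  have := hG.finite
  have := hG.normal
  obtain ⟨-, -, -, hcard⟩ := hG.orderOf_eq hε hk
  refine disjoint_of_card_mul_le ?_
  rw [Nat.card_zpowers, Nat.card_zpowers, ← hcard]
  exact (Nat.card_congr (Equiv.setCongr (hG.isCentralCommutatorPair hε hk).coe_closure_eq_mul)).le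

theorem four_dvd_orderOf (hε : ε ≤ 1) (hk : 2 ≤ k) :
    4 ∣ orderOf x1 ∧ 4 ∣ orderOf x2 := by
  have := hG.normal
  obtain ⟨ho1, ho2, -⟩ := hG.orderOf_eq hε hk
  rw [ho1, ho2]
  exact ⟨pow_dvd_pow 2 (by omega : 2 ≤ k + ε), pow_dvd_pow 2 hk⟩

theorem commute_of_sq_eq_one (hε : ε ≤ 1) (hk : 2 ≤ k) {g g' : G}
    (hg : g ∈ closure {x1, x2}) (hg2 : g ^ 2 = 1) (hg' : g' ∈ closure {x1, x2}) :
    Commute g g' :=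
  have := hG.finite
  (hG.isCentralCommutatorPair hε hk).commute_of_sq_eq_one (hG.disjoint_zpowers hε hk)
    (hG.four_dvd_orderOf hε hk).1 (hG.four_dvd_orderOf hε hk).2 hg hg2 hg'

theorem card_inf_le_four (hε : ε ≤ 1) (hk : 2 ≤ k) {E : Subgroup G}
    (hE : ∀ g ∈ E, g ^ 2 = 1) : Nat.card (closure {x1, x2} ⊓ E : Subgroup G) ≤ 4 :=
  have := hG.finite
  (hG.isCentralCommutatorPair hε hk).card_le_four (hG.disjoint_zpowers hε hk)
    (hG.four_dvd_orderOf hε hk).1 (hG.four_dvd_orderOf hε hk).2 inf_le_left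
    fun g hg => hE g hg.2

theorem fam8t2_sq (hε : ε ≤ 1) (hk : 2 ≤ k) : fam8t2 k ε m x1 x2 ^ 2 = 1 := by
  have hz1 := fam8z1_sq hε (by omega) hG.2.2.1 hG.2.2.2.1
  have hz2 := fam8z2_sq (by omega) hG.2.2.1 hG.2.2.2.1
  have hc := hG.commute_of_sq_eq_one hε hk (fam8z1_mem_closure k ε x1 x2) hz1
    (fam8z2_mem_closure k ε x1 x2)
  rw [fam8t2, (hc.pow_pow _ _).mul_pow, ← pow_mul, mul_comm, pow_mul, hz1, ← pow_mul, mul_comm,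
    pow_mul, hz2, one_pow, one_pow, one_mul]

theorem conj_sq_eq (hε : ε ≤ 1) (hk : 2 ≤ k) :
    (y ^ 2)⁻¹ * x1 * y ^ 2 = x1⁻¹ * fam8t2 k ε m x1 x2 := by
  have hx2 : Commute x2 (x1 ^ 2)⁻¹ :=
    (hG.isCentralCommutatorPair hε hk).symm.commute_sq.inv_right
  obtain ⟨-, -, -, -, -, h4, h5, -⟩ := hG
  calc (y ^ 2)⁻¹ * x1 * y ^ 2 = y⁻¹ * (y⁻¹ * x1 * y) * y := by simp only [sq]; group
    _ = (y⁻¹ * x1 * y) * (y⁻¹ * x2 * y) := by nth_rewrite 1 [h4]; group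
    _ = x1 * (x2 * (x1 ^ 2)⁻¹) * x2⁻¹ * fam8t2 k ε m x1 x2 := by
      rw [h4, h5, fam8t2]; group
    _ = x1⁻¹ * fam8t2 k ε m x1 x2 := by rw [hx2.eq]; group

theorem exists_conj_eq_inv_mul (hε : ε ≤ 1) (hk : 2 ≤ k) {a : G}
    (ha : a ∈ closure {x1, x2}) :
    ∃ u ∈ closure {x1, x2}, u ^ 2 = 1 ∧
      (y ^ 2 * a)⁻¹ * x1 * (y ^ 2 * a) = x1⁻¹ * u := by
  have := hG.finite
  have hP := hG.isCentralCommutatorPair hε hk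
  obtain ⟨n, hn⟩ := hP.exists_conj_eq_mul_zpow ha
  set s := fam8z1 k ε x1 x2 ^ t3e m
  set w := fam8t2 k ε m x1 x2 with hw_def
  have hw := fam8t2_mem_closure k ε m x1 x2
  have hw2 := hG.fam8t2_sq hε hk
  have hsn : (s ^ n)⁻¹ ∈ closure {x1, x2} :=
    inv_mem (zpow_mem (pow_mem (fam8z1_mem_closure k ε x1 x2) _) n)
  have hsn2 : ((s ^ n)⁻¹) ^ 2 = 1 := by
    rw [inv_pow, ← zpow_natCast, zpow_comm, zpow_natCast, hP.sq_eq_one, one_zpow, inv_one]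
  refine ⟨(s ^ n)⁻¹ * w, mul_mem hsn hw, ?_, ?_⟩
  · rw [(hG.commute_of_sq_eq_one hε hk hsn hsn2 hw).mul_pow, hsn2, hw2, one_mul]
  · calc (y ^ 2 * a)⁻¹ * x1 * (y ^ 2 * a) = a⁻¹ * ((y ^ 2)⁻¹ * x1 * y ^ 2) * a := by group
      _ = (a⁻¹ * x1 * a)⁻¹ * (a⁻¹ * (w * a)) := by
        rw [hG.conj_sq_eq hε hk, ← hw_def]; group
      _ = (x1 * s ^ n)⁻¹ * w := by
        rw [hn, (hG.commute_of_sq_eq_one hε hk hw hw2 ha).eq, inv_mul_cancel_left]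
      _ = x1⁻¹ * ((s ^ n)⁻¹ * w) := by
        rw [mul_inv_rev, ← (hP.commute_left.zpow_right n).inv_inv.eq, mul_assoc]

theorem not_normal (hε : ε ≤ 1) (hk : 2 ≤ k) (hbig : 3 ≤ k + ε) {B : Subgroup G}
    (hB : ∀ g ∈ B, g ^ 2 = 1) (hcard : 4 < Nat.card B) : ¬ B.Normal := by
  intro hBn
  have := hG.finite
  have := hG.normal
  obtain ⟨ho1, -, hoy, -⟩ := hG.orderOf_eq hε hk
  obtain ⟨t, htB, ht⟩ := exists_mem_mk_eq_pow (m := 2) hG.zpowers_mk_eq_top hoy hB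
    ((hG.card_inf_le_four hε hk hB).trans_lt hcard)
  have ha : (y ^ 2)⁻¹ * t ∈ closure {x1, x2} :=
    QuotientGroup.eq.mp (by rw [QuotientGroup.mk_pow, ht])
  obtain ⟨u, hu, hu2, hconj⟩ := hG.exists_conj_eq_inv_mul hε hk ha
  rw [mul_inv_cancel_left] at hconj
  have hx1u := hG.commute_of_sq_eq_one hε hk hu hu2 (subset_closure (by simp) : x1 ∈ _)
  have hx4 := hB _ (mul_mem (inv_mem htB) (hBn.conj_mem' t htB x1))
  rw [inv_mul_conj_sq_eq_pow_four hconj hx1u.symm hu2] at hx4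
  have h8 : 2 ^ 3 ≤ orderOf x1 := ho1 ▸ Nat.pow_le_pow_right (by norm_num) hbig
  have h4 : orderOf x1 ≤ 4 := orderOf_le_of_pow_eq_one (by norm_num) hx4
  omega

end IsFam8

end Family8

theorem fam8_max_elem_ab_general (k ε m : ℕ) (hε : ε ≤ 1)
    (hn : 6 ≤ 2 * k + 2 + ε) {G : Type*} [Group G] (x1 x2 y : G)
    (hG : IsFam8 k ε m x1 x2 y) :
    (∀ E : Subgroup G, IsMaxElemAb2 E → Nat.card E ≤ 2 ^ 3) ∧
    (2 ^ 6 < Nat.card G →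
      ∀ B : Subgroup G, IsMaxElemAb2 B → Nat.card B = 2 ^ 3 → ¬ B.Normal) := by
  have hk : 2 ≤ k := by omega
  have := hG.finite
  have := hG.normal
  obtain ⟨-, -, hoy, -⟩ := hG.orderOf_eq hε hk
  refine ⟨fun E hE => ?_, fun hbig B hB hB8 => ?_⟩
  · calc Nat.card E ≤ Nat.card (closure {x1, x2} ⊓ E : Subgroup G) * 2 :=
          card_le_card_inf_mul_two (m := 2) hG.zpowers_mk_eq_top hoy hE.1.2
      _ ≤ 2 ^ 3 := by linarith [hG.card_inf_le_four hε hk hE.1.2]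
  · rw [hG.1, Nat.pow_lt_pow_iff_right (by norm_num)] at hbig
    exact hG.not_normal hε hk (by omega) hB.1.2 (by rw [hB8]; norm_num)

theorem fam8_max_elem_ab (k ε m : ℕ) (hε : ε ≤ 1) (hm : 18 ≤ m) (hm' : m ≤ 27)
    (hn : 6 ≤ 2 * k + 2 + ε) {G : Type*} [Group G] (x1 x2 y : G)
    (hG : IsFam8 k ε m x1 x2 y) :
    (∀ E : Subgroup G, IsMaxElemAb2 E → Nat.card E ≤ 2 ^ 3) ∧
    (2 ^ 6 < Nat.card G →
      ∀ B : Subgroup G, IsMaxElemAb2 B → Nat.card B = 2 ^ 3 → ¬ B.Normal) :=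
  fam8_max_elem_ab_general k ε m hε hn x1 x2 y hG
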